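/- arXiv:1106.1968 — 6 statements merged into one kernel-verified Lean document; each statement's English description precedes it below -/
import Mathlib

section
/- Let θ be an irrational number, d a nonzero integer, and f : 𝕋 → ℝ a continuous function with mean value η. Suppose g : 𝕋 → ℝ is a continuous function with g(x) − g(e^{2πiθ}x) = f(x) − η for all x ∈ 𝕋, and let m and k be integers. Then the map ψ : T² → T² defined by ψ(x, y) = (x·e^{2πi(mθ + η + k)/d}, x^m·y·e^{2πi g(x)}) is a homeomorphism of T² preserving the Haar measure of T², and it satisfies ψ ∘ φ_{θ,d,f} = φ_{θ,d,0} ∘ ψ. -/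
open MeasureTheory

noncomputable instance : MeasurableSpace Circle := borel Circle
instance : BorelSpace Circle := ⟨rfl⟩

/-- The Furstenberg transformation `φ_{θ,d,f}` of the two-torus `𝕋 × 𝕋`:
`(x, y) ↦ (x·e^{2πiθ}, x^d·y·e^{2πi f(x)})`. -/
noncomputable def furstenberg (θ : ℝ) (d : ℤ) (f : Circle → ℝ) :
    Circle × Circle → Circle × Circle :=
  fun p => (p.1 * Circle.exp (2 * Real.pi * θ),
    p.1 ^ d * p.2 * Circle.exp (2 * Real.pi * f p.1))

/-- The mean value `η = ∫_𝕋 f dm` of a function on the circle with respect to the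
normalized Haar measure, computed as `∫₀¹ f(e^{2πit}) dt`. -/
noncomputable def circleMean (f : Circle → ℝ) : ℝ :=
  ∫ t in (0:ℝ)..1, f (Circle.exp (2 * Real.pi * t))

lemma circle_exp_pow (t : ℝ) (n : ℕ) : Circle.exp t ^ n = Circle.exp (n * t) := by
  induction n with
  | zero => simp
  | succ p ih => rw [pow_succ, ih, ← Circle.exp_add]; push_cast; ring_nf

lemma circle_exp_zpow (t : ℝ) (n : ℤ) : Circle.exp t ^ n = Circle.exp (n * t) := by
  cases n with
  | ofNat p => rw [Int.ofNat_eq_coe, zpow_natCast, circle_exp_pow]; norm_num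
  | negSucc p =>
      rw [zpow_negSucc, circle_exp_pow, ← Circle.exp_neg]
      congr 1
      push_cast
      ring

lemma exists_homeomorph_skew (g : Circle → ℝ) (hgcont : Continuous g) (m : ℤ) (c : Circle) :
    ∃ Ψ : Circle × Circle ≃ₜ Circle × Circle,
      ⇑Ψ = fun p : Circle × Circle =>
        (p.1 * c, p.1 ^ m * p.2 * Circle.exp (2 * Real.pi * g p.1)) := by
  refine ⟨{ toFun := fun p => (p.1 * c, p.1 ^ m * p.2 * Circle.exp (2 * Real.pi * g p.1)),
            invFun := fun q => (q.1 / c,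
              (q.1 / c) ^ (-m) * (q.2 / Circle.exp (2 * Real.pi * g (q.1 / c)))),
            left_inv := ?_, right_inv := ?_,
            continuous_toFun := ?_, continuous_invFun := ?_ }, rfl⟩
  · rintro ⟨x, y⟩
    have h1 : x * c / c = x := mul_div_cancel_right x c
    refine Prod.ext (by simp [h1]) ?_
    simp only [h1]
    rw [mul_div_cancel_right]
    group
  · rintro ⟨u, v⟩
    have h1 : u / c * c = u := div_mul_cancel u c
    refine Prod.ext h1 ?_
    simp only [h1]
    group
    exact div_mul_cancel _ _
  · fun_prop
  · fun_prop

lemma measurePreserving_skew (g : Circle → ℝ) (hgcont : Continuous g) (m : ℤ) (c : Circle) :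
    MeasurePreserving
      (fun p : Circle × Circle => (p.1 * c, p.1 ^ m * p.2 * Circle.exp (2 * Real.pi * g p.1)))
      Measure.haar Measure.haar := by
  set μ : Measure Circle := Measure.haar with hμ
  have hT : MeasurePreserving (fun x : Circle => x * c) μ μ :=
    measurePreserving_mul_right μ c
  set G : Circle → Circle → Circle :=
    fun x y => x ^ m * y * Circle.exp (2 * Real.pi * g x) with hG
  have hGc : Continuous (Function.uncurry G) := by
    simp only [hG, Function.uncurry]
    fun_prop
  have hmap : ∀ x : Circle, Measure.map (G x) μ = μ := by
    intro x
    have : G x = fun y => (x ^ m * Circle.exp (2 * Real.pi * g x)) * y := by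
      funext y
      simp only [hG]
      exact mul_right_comm _ _ _
    rw [this]
    exact map_mul_left_eq_self μ _
  have hps : MeasurePreserving
      (fun p : Circle × Circle => (p.1 * c, G p.1 p.2)) (μ.prod μ) (μ.prod μ) :=
    hT.skew_product hGc.measurable (Filter.Eventually.of_forall hmap)
  have hprod : (Measure.haar : Measure (Circle × Circle)) =
      Measure.haarScalarFactor Measure.haar (μ.prod μ) • (μ.prod μ) :=
    Measure.isMulInvariant_eq_smul_of_compactSpace _ _
  refine ⟨hps.measurable, ?_⟩
  rw [hprod, Measure.map_smul, hps.map_eq]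

theorem furstenberg_conjugating_map_is_measure_preserving_homeomorphism
    (θ : ℝ) (hθ : Irrational θ) (d : ℤ) (hd : d ≠ 0) (f : Circle → ℝ)
    (hfcont : Continuous f) (g : Circle → ℝ) (hgcont : Continuous g)
    (hg : ∀ x : Circle, g x - g (Circle.exp (2 * Real.pi * θ) * x) = f x - circleMean f)
    (m k : ℤ)
    (ψ : Circle × Circle → Circle × Circle)
    (hψ : ∀ p : Circle × Circle, ψ p =
      (p.1 * Circle.exp (2 * Real.pi * ((m * θ + circleMean f + k) / d)),
       p.1 ^ m * p.2 * Circle.exp (2 * Real.pi * g p.1))) :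
    (∃ Ψ : Circle × Circle ≃ₜ Circle × Circle, ⇑Ψ = ψ) ∧
    MeasurePreserving ψ Measure.haar Measure.haar ∧
    ψ ∘ furstenberg θ d f = furstenberg θ d 0 ∘ ψ := by
  have hψfun : ψ = fun p : Circle × Circle =>
      (p.1 * Circle.exp (2 * Real.pi * ((m * θ + circleMean f + k) / d)),
       p.1 ^ m * p.2 * Circle.exp (2 * Real.pi * g p.1)) := funext hψ
  refine ⟨?_, ?_, ?_⟩
  · obtain ⟨Ψ, hΨ⟩ := exists_homeomorph_skew g hgcont m
      (Circle.exp (2 * Real.pi * ((m * θ + circleMean f + k) / d)))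
    exact ⟨Ψ, by rw [hΨ, hψfun]⟩
  · rw [hψfun]
    exact measurePreserving_skew g hgcont m _
  · have hdR : (d : ℝ) ≠ 0 := Int.cast_ne_zero.mpr hd
    funext p
    obtain ⟨x, y⟩ := p
    simp only [Function.comp_apply, furstenberg, hψ]
    refine Prod.ext ?_ ?_
    · exact mul_right_comm _ _ _
    · simp only [Pi.zero_apply, mul_zero, Circle.exp_zero, mul_one]
      rw [mul_zpow, mul_zpow, circle_exp_zpow, circle_exp_zpow]
      have hgx : g (x * Circle.exp (2 * Real.pi * θ)) = g x - f x + circleMean f := by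
        have := hg x
        rw [mul_comm] at this
        linarith
      rw [hgx]
      have key : Circle.exp (↑m * (2 * Real.pi * θ)) * Circle.exp (2 * Real.pi * f x) *
          Circle.exp (2 * Real.pi * (g x - f x + circleMean f)) =
          Circle.exp (↑d * (2 * Real.pi * ((↑m * θ + circleMean f + ↑k) / ↑d))) *
          Circle.exp (2 * Real.pi * g x) := by
        have hL : Circle.exp (↑m * (2 * Real.pi * θ)) * Circle.exp (2 * Real.pi * f x) *
            Circle.exp (2 * Real.pi * (g x - f x + circleMean f)) =
            Circle.exp (↑m * (2 * Real.pi * θ) + 2 * Real.pi * f x +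
              2 * Real.pi * (g x - f x + circleMean f)) := by
          rw [← Circle.exp_add, ← Circle.exp_add]
        have hR : Circle.exp (↑d * (2 * Real.pi * ((↑m * θ + circleMean f + ↑k) / ↑d))) *
            Circle.exp (2 * Real.pi * g x) =
            Circle.exp (↑d * (2 * Real.pi * ((↑m * θ + circleMean f + ↑k) / ↑d)) +
              2 * Real.pi * g x) := (Circle.exp_add _ _).symm
        rw [hL, hR]
        have harg : (↑d * (2 * Real.pi * ((↑m * θ + circleMean f + ↑k) / ↑d))) +
            2 * Real.pi * g x =
            (↑m * (2 * Real.pi * θ) + 2 * Real.pi * f x +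
              2 * Real.pi * (g x - f x + circleMean f)) + 2 * Real.pi * ↑k := by
          field_simp
          ring
        rw [harg]
        symm
        rw [Circle.exp_add, Circle.exp_two_pi_mul_int, mul_one]
      calc x ^ m * Circle.exp (↑m * (2 * Real.pi * θ)) *
            (x ^ d * y * Circle.exp (2 * Real.pi * f x)) *
            Circle.exp (2 * Real.pi * (g x - f x + circleMean f))
          = (x ^ d * (x ^ m * y)) * (Circle.exp (↑m * (2 * Real.pi * θ)) *
              Circle.exp (2 * Real.pi * f x) *
              Circle.exp (2 * Real.pi * (g x - f x + circleMean f))) := by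
            simp only [mul_assoc, mul_comm, mul_left_comm]
        _ = (x ^ d * (x ^ m * y)) *
              (Circle.exp (↑d * (2 * Real.pi * ((↑m * θ + circleMean f + ↑k) / ↑d))) *
              Circle.exp (2 * Real.pi * g x)) := by rw [key]
        _ = x ^ d * Circle.exp (↑d * (2 * Real.pi * ((↑m * θ + circleMean f + ↑k) / ↑d))) *
              (x ^ m * y * Circle.exp (2 * Real.pi * g x)) := by
            simp only [mul_assoc, mul_comm, mul_left_comm]
end

section
/- There exist an irrational number θ and a strictly increasing sequence of positive integers (n_k)_{k≥1} such that n_k ≥ 2^k and 0 < n_kθ − ⌊n_kθ⌋ ≤ 2^{−n_k} for every k ≥ 1. -/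
/-!
Take `θ = ∑ 2^(-a i)` with `a (k + 1) = a k + 2 ^ a k + 1`. Multiplying by `2 ^ a k` turns the
first `k + 1` terms into integers, so the fractional part of `2 ^ a k * θ` is `2 ^ a k` times the
tail, which is positive and at most `2 ^ (a k + 1 - a (k + 1)) = 2 ^ (-2 ^ a k)`. If `θ = p / q`,
then `q * fract (n * θ)` is an integer, so `fract (n * θ)` cannot lie strictly between `0`
and `1 / q`; hence `θ` is irrational.
-/

open Finset

theorem irrational_of_forall_exists_fract_mul_pos_lt {θ : ℝ}
    (h : ∀ ε > 0, ∃ n : ℕ, 0 < Int.fract (n * θ) ∧ Int.fract (n * θ) < ε) : Irrational θ := by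
  rintro ⟨q, rfl⟩
  have hden : (0 : ℝ) < q.den := by exact_mod_cast q.pos
  obtain ⟨n, hpos, hlt⟩ := h (q.den : ℝ)⁻¹ (by positivity)
  set z : ℤ := n * q.num - q.den * ⌊(n : ℝ) * q⌋
  have hz : (z : ℝ) = q.den * Int.fract ((n : ℝ) * q) := by
    have hq : (q.den : ℝ) * q = q.num := by exact_mod_cast q.den_mul_eq_num
    push_cast [z, Int.fract]
    linear_combination (-(n : ℝ)) * hq
  have hz0 : 0 < z := by exact_mod_cast hz ▸ mul_pos hden hpos
  have hz1 : z < 1 := by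
    exact_mod_cast hz ▸ (mul_lt_mul_of_pos_left hlt hden).trans_eq (mul_inv_cancel₀ hden.ne')
  omega

lemma two_pow_mul_inv_two_pow_lt_one {m n : ℕ} (h : m < n) : (2 : ℝ) ^ m * 2⁻¹ ^ n < 1 := by
  rw [inv_pow, ← div_eq_mul_inv, div_lt_one (by positivity)]
  exact pow_lt_pow_right₀ one_lt_two h

lemma exists_natCast_eq_two_pow_mul_sum_range {a : ℕ → ℕ} (ha : Monotone a) (k : ℕ) :
    ∃ N : ℕ, (2 : ℝ) ^ a k * ∑ i ∈ range (k + 1), 2⁻¹ ^ a i = N :=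
  ⟨∑ i ∈ range (k + 1), 2 ^ (a k - a i), by
    push_cast [mul_sum]
    refine sum_congr rfl fun i hi => ?_
    rw [inv_pow, ← pow_sub₀ _ two_ne_zero (ha (Nat.lt_succ_iff.mp (mem_range.mp hi)))]⟩

noncomputable def sumInvTwoPow (a : ℕ → ℕ) : ℝ := ∑' i, (2 : ℝ)⁻¹ ^ a i

section StrictMono

variable {a : ℕ → ℕ} (ha : StrictMono a)
include ha

lemma summable_inv_two_pow_comp : Summable fun i => (2 : ℝ)⁻¹ ^ a i :=
  (summable_geometric_of_lt_one (by norm_num) (by norm_num)).comp_injective ha.injective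

lemma tsum_inv_two_pow_comp_add_pos (k : ℕ) : 0 < ∑' i, (2 : ℝ)⁻¹ ^ a (i + k) :=
  ((summable_nat_add_iff k).mpr (summable_inv_two_pow_comp ha)).tsum_pos
    (fun _ => by positivity) 0 (by positivity)

lemma tsum_inv_two_pow_comp_add_le (k : ℕ) :
    ∑' i, (2 : ℝ)⁻¹ ^ a (i + k) ≤ 2 * 2⁻¹ ^ a k := by
  have hgeom : Summable fun i : ℕ => (2 : ℝ)⁻¹ ^ i :=
    summable_geometric_of_lt_one (by norm_num) (by norm_num)
  calc ∑' i, (2 : ℝ)⁻¹ ^ a (i + k) ≤ ∑' i, (2 : ℝ)⁻¹ ^ a k * 2⁻¹ ^ i := by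
        refine ((summable_nat_add_iff k).mpr (summable_inv_two_pow_comp ha)).tsum_le_tsum
          (fun i => ?_) (hgeom.mul_left _)
        rw [← pow_add, add_comm (a k)]
        exact pow_le_pow_of_le_one (by norm_num) (by norm_num) (ha.add_le_nat i k)
    _ = 2 * 2⁻¹ ^ a k := by rw [tsum_mul_left, tsum_geometric_inv_two, mul_comm]

lemma two_pow_mul_tsum_inv_two_pow_comp_succ_le (k : ℕ) :
    (2 : ℝ) ^ a k * ∑' i, (2 : ℝ)⁻¹ ^ a (i + (k + 1)) ≤ 2 ^ (a k + 1) * 2⁻¹ ^ a (k + 1) := by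
  calc (2 : ℝ) ^ a k * ∑' i, (2 : ℝ)⁻¹ ^ a (i + (k + 1))
      ≤ 2 ^ a k * (2 * 2⁻¹ ^ a (k + 1)) := by
        gcongr
        exact tsum_inv_two_pow_comp_add_le ha _
    _ = 2 ^ (a k + 1) * 2⁻¹ ^ a (k + 1) := by ring

end StrictMono

section Gap

variable {a : ℕ → ℕ} (ha : ∀ k, a k + 1 < a (k + 1))
include ha

lemma strictMono_of_add_one_lt : StrictMono a :=
  strictMono_nat_of_lt_succ fun k => (Nat.lt_succ_self _).trans (ha k)

lemma fract_two_pow_mul_sumInvTwoPow (k : ℕ) :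
    Int.fract ((2 : ℝ) ^ a k * sumInvTwoPow a)
      = 2 ^ a k * ∑' i, (2 : ℝ)⁻¹ ^ a (i + (k + 1)) := by
  have hmono := strictMono_of_add_one_lt ha
  obtain ⟨N, hN⟩ := exists_natCast_eq_two_pow_mul_sum_range hmono.monotone k
  rw [sumInvTwoPow, ← (summable_inv_two_pow_comp hmono).sum_add_tsum_nat_add (k + 1), mul_add,
    hN, Int.fract_natCast_add, Int.fract_eq_self]
  exact ⟨by positivity, (two_pow_mul_tsum_inv_two_pow_comp_succ_le hmono k).trans_lt
    (two_pow_mul_inv_two_pow_lt_one (ha k))⟩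

lemma fract_two_pow_mul_sumInvTwoPow_pos (k : ℕ) :
    0 < Int.fract ((2 : ℝ) ^ a k * sumInvTwoPow a) := by
  rw [fract_two_pow_mul_sumInvTwoPow ha]
  have := tsum_inv_two_pow_comp_add_pos (strictMono_of_add_one_lt ha) (k + 1)
  positivity

lemma fract_two_pow_mul_sumInvTwoPow_le (k : ℕ) :
    Int.fract ((2 : ℝ) ^ a k * sumInvTwoPow a) ≤ 2 ^ (a k + 1) * 2⁻¹ ^ a (k + 1) := by
  rw [fract_two_pow_mul_sumInvTwoPow ha]
  exact two_pow_mul_tsum_inv_two_pow_comp_succ_le (strictMono_of_add_one_lt ha) k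

end Gap

def rapidSeq : ℕ → ℕ
  | 0 => 0
  | k + 1 => rapidSeq k + 2 ^ rapidSeq k + 1

lemma rapidSeq_add_one_lt (k : ℕ) : rapidSeq k + 1 < rapidSeq (k + 1) := by
  have : 0 < 2 ^ rapidSeq k := Nat.two_pow_pos _
  simp only [rapidSeq]
  omega

lemma strictMono_rapidSeq : StrictMono rapidSeq :=
  strictMono_of_add_one_lt rapidSeq_add_one_lt

lemma fract_two_pow_rapidSeq_mul_pos_le (k : ℕ) :
    0 < Int.fract (((2 ^ rapidSeq k : ℕ) : ℝ) * sumInvTwoPow rapidSeq) ∧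
      Int.fract (((2 ^ rapidSeq k : ℕ) : ℝ) * sumInvTwoPow rapidSeq)
        ≤ ((2 : ℝ) ^ 2 ^ rapidSeq k)⁻¹ := by
  rw [Nat.cast_pow, Nat.cast_ofNat]
  refine ⟨fract_two_pow_mul_sumInvTwoPow_pos rapidSeq_add_one_lt k,
    (fract_two_pow_mul_sumInvTwoPow_le rapidSeq_add_one_lt k).trans_eq ?_⟩
  set m := rapidSeq k
  have hsucc : rapidSeq (k + 1) = (m + 1) + 2 ^ m := by simp only [rapidSeq, m]; ring
  rw [hsucc, pow_add (2⁻¹ : ℝ), ← mul_assoc, ← mul_pow, mul_inv_cancel₀ two_ne_zero, one_pow,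
    one_mul, inv_pow]

lemma irrational_sumInvTwoPow_rapidSeq : Irrational (sumInvTwoPow rapidSeq) := by
  refine irrational_of_forall_exists_fract_mul_pos_lt fun ε hε => ?_
  obtain ⟨k, hk⟩ := exists_pow_lt_of_lt_one hε (by norm_num : (2 : ℝ)⁻¹ < 1)
  obtain ⟨hpos, hle⟩ := fract_two_pow_rapidSeq_mul_pos_le k
  have hsmall : ((2 : ℝ) ^ 2 ^ rapidSeq k)⁻¹ ≤ 2⁻¹ ^ k := by
    rw [inv_pow]
    gcongr
    · norm_num
    · exact (strictMono_rapidSeq.id_le k).trans Nat.lt_two_pow_self.le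
  exact ⟨2 ^ rapidSeq k, hpos, (hle.trans hsmall).trans_lt hk⟩

theorem exists_irrational_with_rapidly_approximating_sequence :
    ∃ θ : ℝ, Irrational θ ∧ ∃ n : ℕ → ℕ,
      (∀ k : ℕ, 1 ≤ k → n k < n (k + 1)) ∧
      (∀ k : ℕ, 1 ≤ k → 2 ^ k ≤ n k ∧
        0 < Int.fract ((n k : ℝ) * θ) ∧ Int.fract ((n k : ℝ) * θ) ≤ ((2 : ℝ) ^ n k)⁻¹) := by
  refine ⟨sumInvTwoPow rapidSeq, irrational_sumInvTwoPow_rapidSeq, fun k => 2 ^ rapidSeq k,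
    fun k _ => ?_, fun k _ => ⟨?_, fract_two_pow_rapidSeq_mul_pos_le k⟩⟩
  · exact Nat.pow_lt_pow_right one_lt_two (strictMono_rapidSeq k.lt_succ_self)
  · exact Nat.pow_le_pow_right two_pos (strictMono_rapidSeq.id_le k)
end

section
/- Define F : ℝ² → ℝ by F(x, y) = exp(−4/(16x² + y²)) for (x, y) ≠ (0, 0) and F(0, 0) = 0. Let ρ : (0, ∞) → ℝ be a function, and define φ_ρ : ℝ² → ℝ², identifying ℝ² with ℂ, by φ_ρ(0) = 0 and φ_ρ(z) = e^{iρ(|z|)}·z for z ≠ 0. Suppose there exist sequences of positive real numbers (r_n) and (r'_n) with 0 < r'_n < r_n, r_n → 0, r_n − r'_n < r_n², ρ(r_n) ∈ π/2 + 2πℤ, and ρ(r'_n) ∈ π + 2πℤ for all n. Then no map ψ : ℝ² → ℝ² satisfying F ∘ ψ = F ∘ φ_ρ is Lipschitz continuous. -/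
open Filter

/-- The function `F(x,y) = exp(−4/(16x² + y²))`, extended by `0` at the origin,
on `ℝ² ≅ ℂ`. -/
noncomputable def ellipticHamiltonian : ℂ → ℝ := fun z =>
  if z = 0 then 0 else Real.exp (-4 / (16 * z.re ^ 2 + z.im ^ 2))

/-- The twist map `φ_ρ(z) = e^{iρ(|z|)}·z` for `z ≠ 0`, with `φ_ρ(0) = 0`. -/
noncomputable def twistMap (ρ : ℝ → ℝ) : ℂ → ℂ := fun z =>
  if z = 0 then 0 else Complex.exp (Complex.I * (ρ ‖z‖ : ℂ)) * z

/-! Off the origin `F = exp (-4 / ‖S v‖²)` with `S (x + iy) = 4x + iy` (`stretchRe`), so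
`F ∘ ψ = F ∘ φ_ρ` forces `‖S (ψ z)‖ = ‖S (φ_ρ z)‖`. Since `φ_ρ` turns `r_n` into `i r_n` and
`r'_n` into `-r'_n`, this gives `‖S (ψ r_n)‖ = r_n` and `‖S (ψ r'_n)‖ = 4 r'_n`. As
`‖S v‖ ≤ 4 ‖v‖`, an `L`-Lipschitz `ψ` would give
`3 r_n - 4 r_n² < 4 r'_n - r_n ≤ 4 L (r_n - r'_n) < 4 L r_n²`,
impossible once `r_n < 3 / (4 (L + 1))`. -/

open Complex

noncomputable def stretchRe (v : ℂ) : ℂ := ⟨4 * v.re, v.im⟩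

lemma stretchRe_sub (v w : ℂ) : stretchRe (v - w) = stretchRe v - stretchRe w := by
  apply Complex.ext <;> simp only [stretchRe, sub_re, sub_im]
  ring

lemma sq_norm_stretchRe (v : ℂ) : ‖stretchRe v‖ ^ 2 = 16 * v.re ^ 2 + v.im ^ 2 := by
  rw [Complex.sq_norm, normSq_apply, stretchRe]
  ring

lemma norm_stretchRe_le (v : ℂ) : ‖stretchRe v‖ ≤ 4 * ‖v‖ := by
  rw [← sq_le_sq₀ (norm_nonneg _) (by positivity), sq_norm_stretchRe, mul_pow, Complex.sq_norm,
    normSq_apply]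
  nlinarith [sq_nonneg v.re]

lemma stretchRe_ne_zero {v : ℂ} (hv : v ≠ 0) : stretchRe v ≠ 0 := by
  contrapose! hv
  apply Complex.ext <;> simp_all [stretchRe, Complex.ext_iff]

lemma ellipticHamiltonian_of_ne_zero {v : ℂ} (hv : v ≠ 0) :
    ellipticHamiltonian v = Real.exp (-4 / ‖stretchRe v‖ ^ 2) := by
  rw [ellipticHamiltonian, if_neg hv, sq_norm_stretchRe]

lemma norm_stretchRe_eq_of_ellipticHamiltonian_eq {v w : ℂ} (hv : v ≠ 0)
    (h : ellipticHamiltonian w = ellipticHamiltonian v) : ‖stretchRe w‖ = ‖stretchRe v‖ := by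
  have hw : w ≠ 0 := by
    rintro rfl
    rw [ellipticHamiltonian_of_ne_zero hv, ellipticHamiltonian, if_pos rfl] at h
    exact (Real.exp_pos _).ne h
  rw [ellipticHamiltonian_of_ne_zero hv, ellipticHamiltonian_of_ne_zero hw, Real.exp_eq_exp,
    div_eq_div_iff (by simpa using stretchRe_ne_zero hw) (by simpa using stretchRe_ne_zero hv)] at h
  exact (sq_eq_sq₀ (norm_nonneg _) (norm_nonneg _)).1 (by linarith)

lemma twistMap_ofReal (ρ : ℝ → ℝ) {s : ℝ} (hs : 0 < s) :
    twistMap ρ s = exp (ρ s * I) * s := by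
  rw [twistMap, if_neg (ofReal_ne_zero.mpr hs.ne'), norm_real, Real.norm_of_nonneg hs.le,
    mul_comm I]

lemma exp_add_two_pi_int_mul_I (θ : ℝ) (j : ℤ) :
    exp (((θ + 2 * Real.pi * j : ℝ) : ℂ) * I) = exp (θ * I) := by
  push_cast
  rw [add_mul, exp_add, show 2 * (Real.pi : ℂ) * j * I = j * (2 * Real.pi * I) by ring,
    exp_int_mul_two_pi_mul_I, mul_one]

lemma twistMap_ofReal_of_eq_add_two_pi_int_mul {ρ : ℝ → ℝ} {s θ : ℝ} (hs : 0 < s)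
    (hρ : ∃ j : ℤ, ρ s = θ + 2 * Real.pi * j) : twistMap ρ s = exp (θ * I) * s := by
  obtain ⟨j, hj⟩ := hρ
  rw [twistMap_ofReal ρ hs, hj, exp_add_two_pi_int_mul_I]

lemma norm_stretchRe_twistMap_of_quarter_turn {ρ : ℝ → ℝ} {s : ℝ} (hs : 0 < s)
    (hρ : ∃ j : ℤ, ρ s = Real.pi / 2 + 2 * Real.pi * j) : ‖stretchRe (twistMap ρ s)‖ = s := by
  rw [← sq_eq_sq₀ (norm_nonneg _) hs.le, sq_norm_stretchRe,
    twistMap_ofReal_of_eq_add_two_pi_int_mul hs hρ, ofReal_div, ofReal_ofNat, exp_pi_div_two_mul_I]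
  simp

lemma norm_stretchRe_twistMap_of_half_turn {ρ : ℝ → ℝ} {s : ℝ} (hs : 0 < s)
    (hρ : ∃ j : ℤ, ρ s = Real.pi + 2 * Real.pi * j) : ‖stretchRe (twistMap ρ s)‖ = 4 * s := by
  rw [← sq_eq_sq₀ (norm_nonneg _) (by positivity), sq_norm_stretchRe,
    twistMap_ofReal_of_eq_add_two_pi_int_mul hs hρ, exp_pi_mul_I]
  simp only [neg_one_mul, neg_re, neg_im, ofReal_re, ofReal_im]
  ring

section Intertwining

variable {ρ : ℝ → ℝ} {ψ : ℂ → ℂ}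

lemma norm_stretchRe_intertwining_eq
    (hψ : ellipticHamiltonian ∘ ψ = ellipticHamiltonian ∘ twistMap ρ) {z : ℂ} (hz : z ≠ 0) :
    ‖stretchRe (ψ z)‖ = ‖stretchRe (twistMap ρ z)‖ := by
  refine norm_stretchRe_eq_of_ellipticHamiltonian_eq ?_ (congrFun hψ z)
  rw [twistMap, if_neg hz]
  exact mul_ne_zero (exp_ne_zero _) hz

lemma four_mul_sub_le_of_lipschitz_intertwining
    (hψ : ellipticHamiltonian ∘ ψ = ellipticHamiltonian ∘ twistMap ρ) {L : ℝ}
    (hlip : ∀ z w, ‖ψ z - ψ w‖ ≤ L * ‖z - w‖) {a b : ℝ} (hb : 0 < b) (hba : b < a)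
    (ha : ∃ j : ℤ, ρ a = Real.pi / 2 + 2 * Real.pi * j)
    (hb' : ∃ j : ℤ, ρ b = Real.pi + 2 * Real.pi * j) :
    4 * b - a ≤ 4 * L * (a - b) := by
  have ha0 : 0 < a := hb.trans hba
  have hψa : ‖stretchRe (ψ a)‖ = a := by
    rw [norm_stretchRe_intertwining_eq hψ (ofReal_ne_zero.2 ha0.ne'),
      norm_stretchRe_twistMap_of_quarter_turn ha0 ha]
  have hψb : ‖stretchRe (ψ b)‖ = 4 * b := by
    rw [norm_stretchRe_intertwining_eq hψ (ofReal_ne_zero.2 hb.ne'),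
      norm_stretchRe_twistMap_of_half_turn hb hb']
  calc 4 * b - a = ‖stretchRe (ψ b)‖ - ‖stretchRe (ψ a)‖ := by rw [hψa, hψb]
    _ ≤ ‖stretchRe (ψ b - ψ a)‖ := by rw [stretchRe_sub]; exact norm_sub_norm_le _ _
    _ ≤ 4 * ‖ψ b - ψ a‖ := norm_stretchRe_le _
    _ ≤ 4 * (L * ‖(b : ℂ) - a‖) := by gcongr; exact hlip _ _
    _ = 4 * L * (a - b) := by
      rw [← ofReal_sub, norm_real, Real.norm_of_nonpos (by linarith)]
      ring

lemma three_lt_of_lipschitz_intertwining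
    (hψ : ellipticHamiltonian ∘ ψ = ellipticHamiltonian ∘ twistMap ρ) {L : ℝ} (hL : 0 ≤ L)
    (hlip : ∀ z w, ‖ψ z - ψ w‖ ≤ L * ‖z - w‖) {a b : ℝ} (hb : 0 < b) (hba : b < a)
    (hclose : a - b < a ^ 2) (ha : ∃ j : ℤ, ρ a = Real.pi / 2 + 2 * Real.pi * j)
    (hb' : ∃ j : ℤ, ρ b = Real.pi + 2 * Real.pi * j) :
    3 < 4 * (L + 1) * a := by
  have h := four_mul_sub_le_of_lipschitz_intertwining hψ hlip hb hba ha hb'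
  have ha0 : 0 < a := hb.trans hba
  have h3 : 3 * a < 4 * (L + 1) * a ^ 2 := by nlinarith
  nlinarith

end Intertwining

theorem no_lipschitz_map_intertwines_twisted_hamiltonian
    (ρ : ℝ → ℝ) (r r' : ℕ → ℝ)
    (hr'pos : ∀ n, 0 < r' n) (hlt : ∀ n, r' n < r n)
    (hr0 : Tendsto r atTop (nhds 0))
    (hclose : ∀ n, r n - r' n < (r n) ^ 2)
    (hρr : ∀ n, ∃ j : ℤ, ρ (r n) = Real.pi / 2 + 2 * Real.pi * j)
    (hρr' : ∀ n, ∃ j : ℤ, ρ (r' n) = Real.pi + 2 * Real.pi * j)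
    (ψ : ℂ → ℂ) (hψ : ellipticHamiltonian ∘ ψ = ellipticHamiltonian ∘ twistMap ρ) :
    ¬ ∃ L : ℝ, 0 < L ∧ ∀ z w : ℂ, ‖ψ z - ψ w‖ ≤ L * ‖z - w‖ := by
  rintro ⟨L, hL, hlip⟩
  have hsmall : Tendsto (fun n => 4 * (L + 1) * r n) atTop (nhds 0) := by
    simpa using hr0.const_mul (4 * (L + 1))
  obtain ⟨n, hn⟩ := (hsmall.eventually (gt_mem_nhds three_pos)).exists
  exact hn.not_gt <| three_lt_of_lipschitz_intertwining hψ hL.le hlip (hr'pos n) (hlt n)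
    (hclose n) (hρr n) (hρr' n)
end

section
/- Let (M, μ) be a measure space with 0 < μ(M) < ∞ and let H : M → ℝ be square-integrable. Set c(K) = (1/μ(M))·∫_M K dμ for square-integrable K. Then −3·∫_M H² dμ ≤ (4·c(H)² − 3·c(H²))·μ(M) ≤ ∫_M H² dμ. Equality holds on the left if and only if ∫_M H dμ = 0, and equality holds on the right if and only if H is constant μ-almost everywhere. -/
open MeasureTheory

/-!
Writing `m` for the mean of `H` and `q` for the mean of `H²`, the helicity is `(4 m² - 3 q) V` and
`∫ H² = q V`, where `V = μ(M)`. The left inequality is `m² ≥ 0` and the right one is Jensen's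
inequality `m² ≤ q` for the strictly convex function `x ↦ x²`, whose equality case is exactly
`H` being a.e. constant.
-/

section Jensen

variable {α : Type*} [MeasurableSpace α] {μ : Measure α} [IsFiniteMeasure μ] {f : α → ℝ}

theorem sq_average_le_average_sq [NeZero μ] (hf : MemLp f 2 μ) :
    (⨍ x, f x ∂μ) ^ 2 ≤ ⨍ x, f x ^ 2 ∂μ :=
  (Even.convexOn_pow even_two).map_average_le (continuous_pow 2).continuousOn isClosed_univ
    (by simp) (hf.integrable one_le_two) hf.integrable_sq

theorem sq_average_eq_average_sq_iff [NeZero μ] (hf : MemLp f 2 μ) :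
    (⨍ x, f x ∂μ) ^ 2 = ⨍ x, f x ^ 2 ∂μ ↔ ∃ a : ℝ, f =ᵐ[μ] fun _ => a := by
  constructor
  · intro h
    rcases (Even.strictConvexOn_pow even_two two_ne_zero).ae_eq_const_or_map_average_lt
      (continuous_pow 2).continuousOn isClosed_univ (by simp) (hf.integrable one_le_two)
      hf.integrable_sq with hconst | hlt
    · exact ⟨_, hconst⟩
    · exact absurd h hlt.ne
  · rintro ⟨a, ha⟩
    have ha_sq : (fun x => f x ^ 2) =ᵐ[μ] fun _ => a ^ 2 := ha.fun_comp (· ^ 2)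
    rw [average_congr ha, average_congr ha_sq, average_const, average_const]

end Jensen

theorem helicity_bounds_of_sq_le {m q V : ℝ} (hV : 0 < V) (hmq : m ^ 2 ≤ q) :
    -3 * (V * q) ≤ (4 * m ^ 2 - 3 * q) * V ∧ (4 * m ^ 2 - 3 * q) * V ≤ V * q ∧
      (-3 * (V * q) = (4 * m ^ 2 - 3 * q) * V ↔ m = 0) ∧
      ((4 * m ^ 2 - 3 * q) * V = V * q ↔ m ^ 2 = q) := by
  have hleft : (4 * m ^ 2 - 3 * q) * V - -3 * (V * q) = 4 * V * m ^ 2 := by ring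
  have hright : V * q - (4 * m ^ 2 - 3 * q) * V = 4 * V * (q - m ^ 2) := by ring
  have hgap_left : 0 ≤ 4 * V * m ^ 2 := by positivity
  have hgap_right : 0 ≤ 4 * V * (q - m ^ 2) := mul_nonneg (by positivity) (by linarith)
  refine ⟨by linarith, by linarith, ?_, ?_⟩
  · rw [eq_comm, ← sub_eq_zero, hleft]
    simp [hV.ne']
  · rw [← sub_eq_zero, ← neg_eq_zero, neg_sub, hright]
    simp [hV.ne', sub_eq_zero, eq_comm]

theorem helicity_bounds_by_L2_norm
    {M : Type*} [MeasurableSpace M] (μ : Measure M)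
    (hpos : 0 < μ Set.univ) (hfin : μ Set.univ < ⊤)
    (H : M → ℝ) (hH : MemLp H 2 μ)
    (c : (M → ℝ) → ℝ) (hc : ∀ K : M → ℝ, c K = ((μ Set.univ).toReal)⁻¹ * ∫ x, K x ∂μ) :
    (-3 * ∫ x, (H x) ^ 2 ∂μ) ≤ (4 * (c H) ^ 2 - 3 * c (fun x => (H x) ^ 2)) * (μ Set.univ).toReal ∧
    (4 * (c H) ^ 2 - 3 * c (fun x => (H x) ^ 2)) * (μ Set.univ).toReal ≤ ∫ x, (H x) ^ 2 ∂μ ∧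
    ((-3 * ∫ x, (H x) ^ 2 ∂μ)
        = (4 * (c H) ^ 2 - 3 * c (fun x => (H x) ^ 2)) * (μ Set.univ).toReal ↔
      (∫ x, H x ∂μ) = 0) ∧
    ((4 * (c H) ^ 2 - 3 * c (fun x => (H x) ^ 2)) * (μ Set.univ).toReal
        = ∫ x, (H x) ^ 2 ∂μ ↔
      ∃ a : ℝ, H =ᵐ[μ] fun _ => a) := by
  have : IsFiniteMeasure μ := ⟨hfin⟩
  have : NeZero μ := ⟨fun h => by simp [h] at hpos⟩
  have hV : 0 < μ.real Set.univ := ENNReal.toReal_pos hpos.ne' hfin.ne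
  have hc_average (K : M → ℝ) : c K = ⨍ x, K x ∂μ := by
    rw [hc, average_eq, smul_eq_mul, measureReal_def]
  have hintegral_sq : ∫ x, H x ^ 2 ∂μ = μ.real Set.univ * ⨍ x, H x ^ 2 ∂μ :=
    (measure_smul_average μ _).symm
  have hintegral_eq_zero : ∫ x, H x ∂μ = 0 ↔ ⨍ x, H x ∂μ = 0 := by
    rw [average_eq, smul_eq_zero, or_iff_right (inv_ne_zero hV.ne')]
  simp only [hc_average, hintegral_sq, ← measureReal_def, hintegral_eq_zero,
    ← sq_average_eq_average_sq_iff hH]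
  exact helicity_bounds_of_sq_le hV (sq_average_le_average_sq hH)
end

section
/- Let (M, μ) be a measure space with 0 < μ(M) < ∞, and for square-integrable H : M → ℝ set c(H) = (1/μ(M))·∫_M H dμ and ℋ(H) = (4·c(H)² − 3·c(H²))·μ(M). Then for every real number c one has ℋ(H − c) = ℋ(H) − 2c·c(H)·μ(M) + c²·μ(M); as a function of c this is a quadratic with global minimum at c = c(H). Moreover, if H is not constant μ-almost everywhere, then {c₁²·ℋ(H − c₂) : c₁, c₂ ∈ ℝ} = ℝ, i.e. these values exhaust all real numbers. -/
/-! Expanding the square, `ℋ(H - s) = ℋ(H - c(H)) + μ(M)·(s - c(H))²` is an upward parabola in `s`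
whose vertex value `ℋ(H - c(H)) = -3 ∫ (H - c(H))²` is negative unless `H` is a.e. constant.
So `s ↦ ℋ(H - s)` takes both signs, and rescaling by `c₁²` reaches every real number. -/

open MeasureTheory

namespace MeasureTheory

variable {α : Type*} [MeasurableSpace α] (μ : Measure α)

noncomputable def meanValue (K : α → ℝ) : ℝ := (μ.real Set.univ)⁻¹ * ∫ x, K x ∂μ

noncomputable def helicity (K : α → ℝ) : ℝ :=
  (4 * meanValue μ K ^ 2 - 3 * meanValue μ (fun x => K x ^ 2)) * μ.real Set.univ

variable {μ}

lemma meanValue_mul_measureReal_univ (hμ : μ.real Set.univ ≠ 0) (K : α → ℝ) :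
    meanValue μ K * μ.real Set.univ = ∫ x, K x ∂μ := by
  rw [meanValue, mul_comm, mul_inv_cancel_left₀ hμ]

lemma helicity_eq (hμ : μ.real Set.univ ≠ 0) (K : α → ℝ) :
    helicity μ K = 4 * meanValue μ K ^ 2 * μ.real Set.univ - 3 * ∫ x, K x ^ 2 ∂μ := by
  rw [helicity, sub_mul, mul_assoc 3, meanValue_mul_measureReal_univ hμ]

lemma integral_sub_const_sq [IsFiniteMeasure μ] {H : α → ℝ} (hH : MemLp H 2 μ) (s : ℝ) :
    ∫ x, (H x - s) ^ 2 ∂μ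
      = ∫ x, H x ^ 2 ∂μ - 2 * s * ∫ x, H x ∂μ + s ^ 2 * μ.real Set.univ := by
  have hH₁ : Integrable H μ := hH.integrable one_le_two
  have hH₂ : Integrable (fun x => H x ^ 2) μ := hH.integrable_sq
  have hexpand : (fun x => (H x - s) ^ 2) = fun x => H x ^ 2 - 2 * s * H x + s ^ 2 := by
    ext x; ring
  have hH₂₁ : Integrable (fun x => H x ^ 2 - 2 * s * H x) μ := hH₂.sub (hH₁.const_mul _)
  rw [hexpand, integral_add hH₂₁ (integrable_const _),
    integral_sub hH₂ (hH₁.const_mul _), integral_const_mul, integral_const, smul_eq_mul,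
    mul_comm (μ.real _)]

lemma helicity_sub_const [IsFiniteMeasure μ] (hμ : μ.real Set.univ ≠ 0) {H : α → ℝ}
    (hH : MemLp H 2 μ) (s : ℝ) :
    helicity μ (fun x => H x - s)
      = helicity μ H - 2 * s * meanValue μ H * μ.real Set.univ + s ^ 2 * μ.real Set.univ := by
  have hmean : meanValue μ (fun x => H x - s) = meanValue μ H - s := by
    rw [meanValue, integral_sub (hH.integrable one_le_two) (integrable_const s), integral_const,
      smul_eq_mul, mul_sub, inv_mul_cancel_left₀ hμ, meanValue]
  rw [helicity_eq hμ, helicity_eq hμ, hmean, integral_sub_const_sq hH,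
    ← meanValue_mul_measureReal_univ hμ H]
  ring

lemma helicity_sub_const_eq_helicity_sub_meanValue_add [IsFiniteMeasure μ]
    (hμ : μ.real Set.univ ≠ 0) {H : α → ℝ} (hH : MemLp H 2 μ) (s : ℝ) :
    helicity μ (fun x => H x - s) = helicity μ (fun x => H x - meanValue μ H)
      + μ.real Set.univ * (s - meanValue μ H) ^ 2 := by
  rw [helicity_sub_const hμ hH, helicity_sub_const hμ hH]
  ring

lemma helicity_sub_meanValue [IsFiniteMeasure μ] (hμ : μ.real Set.univ ≠ 0) {H : α → ℝ}
    (hH : MemLp H 2 μ) :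
    helicity μ (fun x => H x - meanValue μ H) = -3 * ∫ x, (H x - meanValue μ H) ^ 2 ∂μ := by
  rw [helicity_sub_const hμ hH, integral_sub_const_sq hH, helicity_eq hμ,
    ← meanValue_mul_measureReal_univ hμ H]
  ring

lemma integral_sub_const_sq_pos {H : α → ℝ} {a : ℝ}
    (hint : Integrable (fun x => (H x - a) ^ 2) μ) (hne : ¬ H =ᵐ[μ] fun _ => a) :
    0 < ∫ x, (H x - a) ^ 2 ∂μ := by
  refine (integral_nonneg fun x => sq_nonneg (H x - a)).lt_of_ne fun hzero => hne ?_
  have hsq := (integral_eq_zero_iff_of_nonneg (fun x => sq_nonneg (H x - a)) hint).mp hzero.symm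
  filter_upwards [hsq] with x hx
  exact sub_eq_zero.mp (pow_eq_zero_iff two_ne_zero |>.mp hx)

end MeasureTheory

lemma exists_sq_mul_eq_of_neg_of_pos {f : ℝ → ℝ} {x y : ℝ} (hx : f x < 0) (hy : 0 < f y)
    (r : ℝ) : ∃ c₁ c₂ : ℝ, c₁ ^ 2 * f c₂ = r := by
  rcases le_or_gt r 0 with hr | hr
  · exact ⟨√(r / f x), x, by
      rw [Real.sq_sqrt (div_nonneg_of_nonpos hr hx.le), div_mul_cancel₀ r hx.ne]⟩
  · exact ⟨√(r / f y), y, by rw [Real.sq_sqrt (div_pos hr hy).le, div_mul_cancel₀ r hy.ne']⟩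

theorem helicity_of_shifted_hamiltonian
    {M : Type*} [MeasurableSpace M] (μ : Measure M)
    (hpos : 0 < μ Set.univ) (hfin : μ Set.univ < ⊤)
    (H : M → ℝ) (hH : MemLp H 2 μ)
    (c : (M → ℝ) → ℝ) (hc : ∀ K : M → ℝ, c K = ((μ Set.univ).toReal)⁻¹ * ∫ x, K x ∂μ)
    (ℋ : (M → ℝ) → ℝ)
    (hℋ : ∀ K : M → ℝ, ℋ K = (4 * (c K) ^ 2 - 3 * c (fun x => (K x) ^ 2)) * (μ Set.univ).toReal) :
    (∀ c₂ : ℝ, ℋ (fun x => H x - c₂)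
        = ℋ H - 2 * c₂ * c H * (μ Set.univ).toReal + c₂ ^ 2 * (μ Set.univ).toReal) ∧
    (∀ c₂ : ℝ, ℋ (fun x => H x - c H) ≤ ℋ (fun x => H x - c₂)) ∧
    ((¬ ∃ a : ℝ, H =ᵐ[μ] fun _ => a) →
      ∀ r : ℝ, ∃ c₁ c₂ : ℝ, c₁ ^ 2 * ℋ (fun x => H x - c₂) = r) := by
  have : IsFiniteMeasure μ := ⟨hfin⟩
  obtain rfl : c = meanValue μ := funext hc
  obtain rfl : ℋ = helicity μ := funext hℋ
  have hV : 0 < μ.real Set.univ := ENNReal.toReal_pos hpos.ne' hfin.ne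
  refine ⟨helicity_sub_const hV.ne' hH, fun s => ?_, fun hnc => ?_⟩
  · rw [helicity_sub_const_eq_helicity_sub_meanValue_add hV.ne' hH s]
    exact le_add_of_nonneg_right (by positivity)
  have hneg : helicity μ (fun x => H x - meanValue μ H) < 0 := by
    rw [helicity_sub_meanValue hV.ne' hH]
    have hvar := integral_sub_const_sq_pos ((hH.sub (memLp_const (meanValue μ H))).integrable_sq)
      (not_exists.mp hnc _)
    linarith
  -- `t` solves `μ(M)·t² = 1 - ℋ(H - c(H))`, so the parabola takes the value `1` at `c(H) + t`
  set t := √((1 - helicity μ (fun x => H x - meanValue μ H)) / μ.real Set.univ)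
  have hpositive : 0 < helicity μ (fun x => H x - (meanValue μ H + t)) := by
    rw [helicity_sub_const_eq_helicity_sub_meanValue_add hV.ne' hH, add_sub_cancel_left,
      Real.sq_sqrt (div_nonneg (by linarith) hV.le), mul_div_cancel₀ _ hV.ne']
    linarith
  exact exists_sq_mul_eq_of_neg_of_pos hneg hpositive
end

section
/- Let H : ℝ → ℝ be a C^∞ function with H(z + 2π) = H(z) for all z, and let c_n = (1/2π)·∫₀^{2π} H(z)·e^{−inz} dz be its Fourier coefficients; assume c₁ = 0 (hence also c_{−1} = 0). Define F, G : ℝ → ℂ by the absolutely convergent series F(z) = Σ_{n ∈ ℤ, n ≠ ±1} c_n·(e^{i(n+1)z}/(n+1) − e^{i(n−1)z}/(n−1)) and G(z) = Σ_{n ∈ ℤ, n ≠ ±1} i·c_n·(e^{i(n+1)z}/(n+1) + e^{i(n−1)z}/(n−1)). Then F and G are real-valued, and (1/2π)·∫₀^{2π} (2·H(z)·(F(z)·cos z − G(z)·sin z) − 3·H(z)²) dz = −Σ_{n ∈ ℤ, n ≠ ±1} (3 + 4/(n² − 1))·|c_n|², where the series on the right converges absolutely. -/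
open scoped Real

/-- The `n`-th term of the series defining the one-form coefficient `F` on the three-torus. -/
noncomputable def torusTermF (c : ℤ → ℂ) (n : ℤ) (z : ℝ) : ℂ :=
  if n = 1 ∨ n = -1 then 0 else
    c n * (Complex.exp (Complex.I * ((n : ℂ) + 1) * (z : ℂ)) / ((n : ℂ) + 1) -
           Complex.exp (Complex.I * ((n : ℂ) - 1) * (z : ℂ)) / ((n : ℂ) - 1))

/-- The `n`-th term of the series defining the one-form coefficient `G` on the three-torus. -/
noncomputable def torusTermG (c : ℤ → ℂ) (n : ℤ) (z : ℝ) : ℂ :=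
  if n = 1 ∨ n = -1 then 0 else
    Complex.I * c n * (Complex.exp (Complex.I * ((n : ℂ) + 1) * (z : ℂ)) / ((n : ℂ) + 1) +
           Complex.exp (Complex.I * ((n : ℂ) - 1) * (z : ℂ)) / ((n : ℂ) - 1))

lemma norm_exp_I_mul_int' (n : ℤ) (z : ℝ) : ‖Complex.exp (Complex.I * (n:ℂ) * (z:ℂ))‖ = 1 := by
  rw [show Complex.I * (n:ℂ) * (z:ℂ) = ((((n:ℝ))*z : ℝ):ℂ) * Complex.I by push_cast; ring,
    Complex.norm_exp_ofReal_mul_I]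


lemma norm_exp_I_mul_int (w : ℝ) (z : ℝ) : ‖Complex.exp (Complex.I * (w:ℂ) * (z:ℂ))‖ = 1 := by
  rw [show Complex.I * (w:ℂ) * (z:ℂ) = ((w*z : ℝ):ℂ) * Complex.I by push_cast; ring,
    Complex.norm_exp_ofReal_mul_I]

lemma norm_exp_neg_I_mul (n : ℤ) (z : ℝ) : ‖Complex.exp (-Complex.I * (n:ℂ) * (z:ℂ))‖ = 1 := by
  rw [show -Complex.I * (n:ℂ) * (z:ℂ) = ((((-n : ℝ))*z : ℝ):ℂ) * Complex.I by push_cast; ring,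
    Complex.norm_exp_ofReal_mul_I]

/-- integration by parts step -/
lemma ibp_step (F : ℝ → ℝ) (hF : ContDiff ℝ (⊤:ℕ∞) F) (hFper : Function.Periodic F (2*π)) (n : ℤ) :
    ∫ z in (0:ℝ)..(2*π), ((deriv F z : ℝ) : ℂ) * Complex.exp (-Complex.I*(n:ℂ)*(z:ℂ))
      = Complex.I * (n:ℂ) * ∫ z in (0:ℝ)..(2*π), (F z:ℂ) * Complex.exp (-Complex.I*(n:ℂ)*(z:ℂ)) := by
  have hdF : ∀ x : ℝ, HasDerivAt (fun z:ℝ => (F z : ℂ)) (((deriv F x : ℝ) : ℂ)) x := fun x =>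
    (((hF.differentiable (by simp)) x).hasDerivAt).ofReal_comp
  have hde : ∀ x : ℝ, HasDerivAt (fun z:ℝ => Complex.exp (-Complex.I*(n:ℂ)*(z:ℂ)))
      (-Complex.I*(n:ℂ) * Complex.exp (-Complex.I*(n:ℂ)*(x:ℂ))) x := by
    intro x
    have h1 : HasDerivAt (fun w:ℂ => Complex.exp (-Complex.I*(n:ℂ)*w))
        (Complex.exp (-Complex.I*(n:ℂ)*(x:ℂ)) * (-Complex.I*(n:ℂ))) (x:ℂ) := by
      simpa using ((hasDerivAt_id ((x:ℝ):ℂ)).const_mul (-Complex.I*(n:ℂ))).cexp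
    simpa [mul_comm] using h1.comp_ofReal
  have hcont : Continuous fun z:ℝ => Complex.exp (-Complex.I*(n:ℂ)*(z:ℂ)) := by
    continuity
  have hcontF' : Continuous fun z:ℝ => ((deriv F z : ℝ) : ℂ) :=
    Complex.continuous_ofReal.comp ((contDiff_infty_iff_deriv.mp hF).2.continuous)
  have key := intervalIntegral.integral_mul_deriv_eq_deriv_mul (a := (0:ℝ)) (b := 2*π)
    (u := fun z:ℝ => Complex.exp (-Complex.I*(n:ℂ)*(z:ℂ)))
    (v := fun z:ℝ => (F z : ℂ))
    (u' := fun x => -Complex.I*(n:ℂ) * Complex.exp (-Complex.I*(n:ℂ)*(x:ℂ)))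
    (v' := fun x => ((deriv F x : ℝ) : ℂ))
    (fun x _ => hde x) (fun x _ => hdF x)
    ((by continuity : Continuous fun x:ℝ => -Complex.I*(n:ℂ) * Complex.exp (-Complex.I*(n:ℂ)*(x:ℂ))).intervalIntegrable _ _)
    (hcontF'.intervalIntegrable _ _)
  have hexp2pi : Complex.exp (-Complex.I*(n:ℂ)*((2*π:ℝ):ℂ)) = 1 := by
    rw [show -Complex.I*(n:ℂ)*((2*π:ℝ):ℂ) = ((-n : ℤ):ℂ) * (2*(π:ℂ)*Complex.I) by push_cast; ring]
    exact Complex.exp_int_mul_two_pi_mul_I (-n)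
  have hF2pi : F (2*π) = F 0 := by simpa using hFper 0
  simp only [hexp2pi, hF2pi, Complex.ofReal_zero, mul_zero, zero_mul, neg_zero,
    Complex.exp_zero, one_mul] at key
  have : ∫ z in (0:ℝ)..(2*π), Complex.exp (-Complex.I*(n:ℂ)*(z:ℂ)) * ((deriv F z : ℝ) : ℂ)
      = - ∫ z in (0:ℝ)..(2*π), (-Complex.I*(n:ℂ) * Complex.exp (-Complex.I*(n:ℂ)*(z:ℂ))) * (F z : ℂ) := by
    rw [key]; ring
  calc ∫ z in (0:ℝ)..(2*π), ((deriv F z : ℝ) : ℂ) * Complex.exp (-Complex.I*(n:ℂ)*(z:ℂ))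
      = ∫ z in (0:ℝ)..(2*π), Complex.exp (-Complex.I*(n:ℂ)*(z:ℂ)) * ((deriv F z : ℝ) : ℂ) := by
        simp_rw [mul_comm]
    _ = - ∫ z in (0:ℝ)..(2*π), (-Complex.I*(n:ℂ) * Complex.exp (-Complex.I*(n:ℂ)*(z:ℂ))) * (F z : ℂ) := this
    _ = Complex.I * (n:ℂ) * ∫ z in (0:ℝ)..(2*π), (F z:ℂ) * Complex.exp (-Complex.I*(n:ℂ)*(z:ℂ)) := by
        rw [← intervalIntegral.integral_neg, ← intervalIntegral.integral_const_mul]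
        congr 1; ext z; ring


lemma intervalIntegral_conj {f : ℝ → ℂ} {a b : ℝ} :
    ∫ x in a..b, (starRingEnd ℂ) (f x) = (starRingEnd ℂ) (∫ x in a..b, f x) := by
  simp only [intervalIntegral]
  rw [integral_conj, integral_conj, ← map_sub]



section Conj

variable (H : ℝ → ℝ) (c : ℤ → ℂ)
variable (hc : ∀ n : ℤ, c n = (1 / (2 * Real.pi) : ℂ) *
      ∫ z in (0:ℝ)..(2 * Real.pi), (H z : ℂ) * Complex.exp (-Complex.I * (n : ℂ) * (z : ℂ)))

open Complex in
include hc in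
lemma conj_c (n : ℤ) : c (-n) = (starRingEnd ℂ) (c n) := by
  rw [hc n, hc (-n), map_mul]
  congr 1
  · rw [show (1 / (2 * Real.pi) : ℂ) = ((1 / (2*Real.pi) : ℝ) : ℂ) by push_cast; ring]
    rw [Complex.conj_ofReal]
  · rw [← intervalIntegral_conj]
    apply intervalIntegral.integral_congr
    intro z _
    simp only [map_mul, Complex.conj_ofReal, ← Complex.exp_conj]
    congr 2
    simp only [map_mul, map_neg, Complex.conj_I, Complex.conj_ofReal, map_intCast]
    push_cast
    ring

include hc in
lemma integral_H_exp (n : ℤ) :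
    ∫ z in (0:ℝ)..(2 * Real.pi), (H z : ℂ) * Complex.exp (Complex.I * (n : ℂ) * (z : ℂ))
      = 2 * (Real.pi:ℂ) * c (-n) := by
  have h1 : ∫ z in (0:ℝ)..(2 * Real.pi), (H z : ℂ) * Complex.exp (-Complex.I * ((-n:ℤ) : ℂ) * (z : ℂ))
      = ∫ z in (0:ℝ)..(2 * Real.pi), (H z : ℂ) * Complex.exp (Complex.I * (n : ℂ) * (z : ℂ)) := by
    apply intervalIntegral.integral_congr
    intro z _
    show (H z:ℂ) * Complex.exp (-Complex.I * ((-n:ℤ):ℂ) * (z:ℂ))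
        = (H z:ℂ) * Complex.exp (Complex.I * (n:ℂ) * (z:ℂ))
    rw [show -Complex.I * ((-n:ℤ):ℂ) * (z:ℂ) = Complex.I * (n:ℂ) * (z:ℂ) by push_cast; ring]
  rw [← h1, hc (-n)]
  have hπ : ((Real.pi:ℂ)) ≠ 0 := Complex.ofReal_ne_zero.mpr Real.pi_ne_zero
  field_simp

end Conj

lemma norm_termF_le (c : ℤ → ℂ) (n : ℤ) (z : ℝ) : ‖torusTermF c n z‖ ≤ 2 * ‖c n‖ := by
  rw [torusTermF]
  split_ifs with hn
  · simp
  · push_neg at hn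
    have h1 : ((n:ℂ) + 1) = (((n+1 : ℤ) : ℝ) : ℂ) := by push_cast; ring
    have h2 : ((n:ℂ) - 1) = (((n-1 : ℤ) : ℝ) : ℂ) := by push_cast; ring
    have hn1 : (1:ℝ) ≤ |((n+1 : ℤ) : ℝ)| := by
      rw [← Int.cast_abs]; exact_mod_cast Int.one_le_abs (by omega)
    have hn2 : (1:ℝ) ≤ |((n-1 : ℤ) : ℝ)| := by
      rw [← Int.cast_abs]; exact_mod_cast Int.one_le_abs (by omega)
    rw [norm_mul, mul_comm]
    apply mul_le_mul_of_nonneg_right _ (norm_nonneg _)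
    calc ‖Complex.exp (Complex.I * ((n:ℂ)+1) * z) / ((n:ℂ)+1) -
           Complex.exp (Complex.I * ((n:ℂ)-1) * z) / ((n:ℂ)-1)‖
        ≤ ‖Complex.exp (Complex.I * ((n:ℂ)+1) * z) / ((n:ℂ)+1)‖ +
          ‖Complex.exp (Complex.I * ((n:ℂ)-1) * z) / ((n:ℂ)-1)‖ := norm_sub_le _ _
      _ ≤ 1 + 1 := by
          apply add_le_add
          · rw [norm_div, h1, norm_exp_I_mul_int, Complex.norm_real, Real.norm_eq_abs]
            rw [div_le_one (by linarith)]; linarith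
          · rw [norm_div, h2, norm_exp_I_mul_int, Complex.norm_real, Real.norm_eq_abs]
            rw [div_le_one (by linarith)]; linarith
      _ = 2 := by norm_num

lemma norm_termG_le (c : ℤ → ℂ) (n : ℤ) (z : ℝ) : ‖torusTermG c n z‖ ≤ 2 * ‖c n‖ := by
  rw [torusTermG]
  split_ifs with hn
  · simp
  · push_neg at hn
    have h1 : ((n:ℂ) + 1) = (((n+1 : ℤ) : ℝ) : ℂ) := by push_cast; ring
    have h2 : ((n:ℂ) - 1) = (((n-1 : ℤ) : ℝ) : ℂ) := by push_cast; ring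
    have hn1 : (1:ℝ) ≤ |((n+1 : ℤ) : ℝ)| := by
      rw [← Int.cast_abs]; exact_mod_cast Int.one_le_abs (by omega)
    have hn2 : (1:ℝ) ≤ |((n-1 : ℤ) : ℝ)| := by
      rw [← Int.cast_abs]; exact_mod_cast Int.one_le_abs (by omega)
    rw [norm_mul, norm_mul, Complex.norm_I, one_mul, mul_comm]
    apply mul_le_mul_of_nonneg_right _ (norm_nonneg _)
    calc ‖Complex.exp (Complex.I * ((n:ℂ)+1) * z) / ((n:ℂ)+1) +
           Complex.exp (Complex.I * ((n:ℂ)-1) * z) / ((n:ℂ)-1)‖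
        ≤ ‖Complex.exp (Complex.I * ((n:ℂ)+1) * z) / ((n:ℂ)+1)‖ +
          ‖Complex.exp (Complex.I * ((n:ℂ)-1) * z) / ((n:ℂ)-1)‖ := norm_add_le _ _
      _ ≤ 1 + 1 := by
          apply add_le_add
          · rw [norm_div, h1, norm_exp_I_mul_int, Complex.norm_real, Real.norm_eq_abs]
            rw [div_le_one (by linarith)]; linarith
          · rw [norm_div, h2, norm_exp_I_mul_int, Complex.norm_real, Real.norm_eq_abs]
            rw [div_le_one (by linarith)]; linarith
      _ = 2 := by norm_num


lemma summable_norm_c (H : ℝ → ℝ) (hsmooth : ContDiff ℝ (⊤:ℕ∞) H)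
    (hper : ∀ z : ℝ, H (z + 2 * Real.pi) = H z) (c : ℤ → ℂ)
    (hc : ∀ n : ℤ, c n = (1 / (2 * Real.pi) : ℂ) *
      ∫ z in (0:ℝ)..(2 * Real.pi), (H z : ℂ) * Complex.exp (-Complex.I * (n : ℂ) * (z : ℂ))) :
    Summable fun n : ℤ => ‖c n‖ := by
  have hperH : Function.Periodic H (2*π) := hper
  have hd1 : ContDiff ℝ (⊤:ℕ∞) (deriv H) := (contDiff_infty_iff_deriv.mp hsmooth).2
  have hper1 : Function.Periodic (deriv H) (2*π) := by
    intro x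
    have h1 : (fun y => H (y + 2*π)) = H := funext hper
    have h2 := deriv_comp_add_const (f := H) (a := 2*π) (x := x)
    rw [h1] at h2; exact h2.symm
  obtain ⟨M, hM⟩ := (isCompact_Icc (a := (0:ℝ)) (b := 2*π)).exists_bound_of_continuousOn
      (f := fun z => ((deriv (deriv H) z : ℝ) : ℂ))
      ((Complex.continuous_ofReal.comp (contDiff_infty_iff_deriv.mp hd1).2.continuous).continuousOn)
  have key : ∀ n : ℤ, n ≠ 0 → ‖c n‖ ≤ M * (1/(n:ℝ)^2) := by
    intro n hn
    have hnR : ((n:ℝ)) ≠ 0 := by exact_mod_cast hn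
    have hn2 : (0:ℝ) < (n:ℝ)^2 := by
      have := pow_pos (abs_pos.mpr hnR) 2
      rwa [sq_abs] at this
    have e1 := ibp_step H hsmooth hperH n
    have e2 := ibp_step (deriv H) hd1 hper1 n
    set A := ∫ z in (0:ℝ)..(2*π), (H z:ℂ) * Complex.exp (-Complex.I*(n:ℂ)*(z:ℂ)) with hAdef
    set B := ∫ z in (0:ℝ)..(2*π), ((deriv (deriv H) z : ℝ):ℂ) * Complex.exp (-Complex.I*(n:ℂ)*(z:ℂ)) with hBdef
    have hBA : B = (Complex.I*(n:ℂ))^2 * A := by rw [e2, e1]; ring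
    have hnormsq : ‖(Complex.I*(n:ℂ))^2‖ = (n:ℝ)^2 := by
      simp [norm_pow, norm_mul, Complex.norm_I, Complex.norm_intCast, sq_abs]
    have hA : ‖A‖ = ‖B‖ / (n:ℝ)^2 := by
      rw [hBA, norm_mul, hnormsq, mul_comm, mul_div_assoc, div_self hn2.ne', mul_one]
    have hB : ‖B‖ ≤ M * (2*π) := by
      have hbd : ∀ x ∈ Set.uIoc (0:ℝ) (2*π), ‖((deriv (deriv H) x : ℝ):ℂ) * Complex.exp (-Complex.I*(n:ℂ)*(x:ℂ))‖ ≤ M := by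
        intro x hx
        have hx' : x ∈ Set.Icc (0:ℝ) (2*π) := by
          rw [Set.uIoc_of_le (by positivity : (0:ℝ) ≤ 2*π)] at hx
          exact ⟨le_of_lt hx.1, hx.2⟩
        rw [norm_mul, norm_exp_neg_I_mul, mul_one]
        exact hM x hx'
      have := intervalIntegral.norm_integral_le_of_norm_le_const hbd
      rw [← hBdef] at this
      calc ‖B‖ ≤ M * |2*π - 0| := this
        _ = M * (2*π) := by rw [sub_zero, abs_of_nonneg (by positivity)]
    have hnc : ‖(1 / (2 * Real.pi) : ℂ)‖ = 1/(2*π) := by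
      have : ((1 / (2 * Real.pi) : ℝ) : ℂ) = (1 / (2 * Real.pi) : ℂ) := by push_cast; ring
      rw [← this, Complex.norm_real, Real.norm_eq_abs, abs_of_nonneg (by positivity)]
    rw [hc n, norm_mul, ← hAdef, hnc]
    calc (1/(2*π)) * ‖A‖ ≤ (1/(2*π)) * ((M*(2*π))/(n:ℝ)^2) := by
          apply mul_le_mul_of_nonneg_left _ (by positivity)
          rw [hA]; gcongr
      _ = M * (1/(n:ℝ)^2) := by field_simp
  have hM0 : 0 ≤ M := le_trans (norm_nonneg _) (hM 0 ⟨le_refl _, by positivity⟩)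
  have hsum : Summable (fun n : ℤ => M * (1/(n:ℝ)^2)) :=
    ((Real.summable_one_div_int_pow (p := 2)).mpr one_lt_two).mul_left M
  apply Summable.of_norm_bounded_eventually hsum
  rw [Filter.eventually_cofinite]
  apply Set.Finite.subset (Set.finite_singleton (0:ℤ))
  intro n hn
  simp only [Set.mem_setOf_eq, norm_norm, not_le] at hn
  simp only [Set.mem_singleton_iff]
  by_contra h
  exact absurd (key n h) (not_le.mpr hn)


lemma conj_termF (c : ℤ → ℂ) (hcc : ∀ n, c (-n) = (starRingEnd ℂ) (c n)) (n : ℤ) (z : ℝ) :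
    (starRingEnd ℂ) (torusTermF c n z) = torusTermF c (-n) z := by
  by_cases hn : n = 1 ∨ n = -1
  · rcases hn with rfl | rfl <;> simp [torusTermF]
  · have hn' : ¬(-n = 1 ∨ -n = -1) := by omega
    rw [torusTermF, torusTermF, if_neg hn, if_neg hn']
    rw [map_mul, ← hcc n, map_sub, map_div₀, map_div₀, ← Complex.exp_conj, ← Complex.exp_conj]
    have e1 : (starRingEnd ℂ) (Complex.I * ((n:ℂ)+1) * (z:ℂ)) = Complex.I * (((-n : ℤ):ℂ) - 1) * (z:ℂ) := by
      simp only [map_mul, Complex.conj_I, Complex.conj_ofReal, map_add, map_one, map_intCast]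
      push_cast; ring
    have e2 : (starRingEnd ℂ) (Complex.I * ((n:ℂ)-1) * (z:ℂ)) = Complex.I * (((-n : ℤ):ℂ) + 1) * (z:ℂ) := by
      simp only [map_mul, Complex.conj_I, Complex.conj_ofReal, map_sub, map_one, map_intCast]
      push_cast; ring
    have e3 : (starRingEnd ℂ) ((n:ℂ)+1) = (n:ℂ)+1 := by
      simp only [map_add, map_one, map_intCast]
    have e4 : (starRingEnd ℂ) ((n:ℂ)-1) = (n:ℂ)-1 := by
      simp only [map_sub, map_one, map_intCast]
    rw [e1, e2, e3, e4]
    have hu : ((n:ℂ)+1) ≠ 0 := by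
      have h : ((n+1 : ℤ):ℂ) ≠ 0 := Int.cast_ne_zero.mpr (by omega)
      push_cast at h; exact h
    have hv : ((n:ℂ)-1) ≠ 0 := by
      have h : ((n-1 : ℤ):ℂ) ≠ 0 := Int.cast_ne_zero.mpr (by omega)
      push_cast at h; exact h
    push_cast
    push_cast at hu hv
    rw [show (-(n:ℂ)+1) = -((n:ℂ)-1) from by ring, show (-(n:ℂ)-1) = -((n:ℂ)+1) from by ring,
      div_neg, div_neg]
    ring

lemma conj_termG (c : ℤ → ℂ) (hcc : ∀ n, c (-n) = (starRingEnd ℂ) (c n)) (n : ℤ) (z : ℝ) :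
    (starRingEnd ℂ) (torusTermG c n z) = torusTermG c (-n) z := by
  by_cases hn : n = 1 ∨ n = -1
  · rcases hn with rfl | rfl <;> simp [torusTermG]
  · have hn' : ¬(-n = 1 ∨ -n = -1) := by omega
    rw [torusTermG, torusTermG, if_neg hn, if_neg hn']
    rw [map_mul, map_mul, ← hcc n, map_add, map_div₀, map_div₀, ← Complex.exp_conj,
      ← Complex.exp_conj, Complex.conj_I]
    have e1 : (starRingEnd ℂ) (Complex.I * ((n:ℂ)+1) * (z:ℂ)) = Complex.I * (((-n : ℤ):ℂ) - 1) * (z:ℂ) := by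
      simp only [map_mul, Complex.conj_I, Complex.conj_ofReal, map_add, map_one, map_intCast]
      push_cast; ring
    have e2 : (starRingEnd ℂ) (Complex.I * ((n:ℂ)-1) * (z:ℂ)) = Complex.I * (((-n : ℤ):ℂ) + 1) * (z:ℂ) := by
      simp only [map_mul, Complex.conj_I, Complex.conj_ofReal, map_sub, map_one, map_intCast]
      push_cast; ring
    have e3 : (starRingEnd ℂ) ((n:ℂ)+1) = (n:ℂ)+1 := by
      simp only [map_add, map_one, map_intCast]
    have e4 : (starRingEnd ℂ) ((n:ℂ)-1) = (n:ℂ)-1 := by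
      simp only [map_sub, map_one, map_intCast]
    rw [e1, e2, e3, e4]
    have hu : ((n:ℂ)+1) ≠ 0 := by
      have h : ((n+1 : ℤ):ℂ) ≠ 0 := Int.cast_ne_zero.mpr (by omega)
      push_cast at h; exact h
    have hv : ((n:ℂ)-1) ≠ 0 := by
      have h : ((n-1 : ℤ):ℂ) ≠ 0 := Int.cast_ne_zero.mpr (by omega)
      push_cast at h; exact h
    push_cast
    push_cast at hu hv
    rw [show (-(n:ℂ)+1) = -((n:ℂ)-1) from by ring, show (-(n:ℂ)-1) = -((n:ℂ)+1) from by ring,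
      div_neg, div_neg]
    ring

lemma im_tsum_termF (c : ℤ → ℂ) (hcc : ∀ n, c (-n) = (starRingEnd ℂ) (c n)) (z : ℝ) :
    (∑' n : ℤ, torusTermF c n z).im = 0 := by
  have h1 : (starRingEnd ℂ) (∑' n : ℤ, torusTermF c n z) = ∑' n : ℤ, torusTermF c n z := by
    calc (starRingEnd ℂ) (∑' n : ℤ, torusTermF c n z)
        = ∑' n : ℤ, (starRingEnd ℂ) (torusTermF c n z) := by
          simp only [starRingEnd_apply]; exact tsum_star
      _ = ∑' n : ℤ, torusTermF c (-n) z := tsum_congr (fun n => conj_termF c hcc n z)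
      _ = ∑' n : ℤ, torusTermF c n z := (Equiv.neg ℤ).tsum_eq (fun n => torusTermF c n z)
  exact Complex.conj_eq_iff_im.mp h1

lemma im_tsum_termG (c : ℤ → ℂ) (hcc : ∀ n, c (-n) = (starRingEnd ℂ) (c n)) (z : ℝ) :
    (∑' n : ℤ, torusTermG c n z).im = 0 := by
  have h1 : (starRingEnd ℂ) (∑' n : ℤ, torusTermG c n z) = ∑' n : ℤ, torusTermG c n z := by
    calc (starRingEnd ℂ) (∑' n : ℤ, torusTermG c n z)
        = ∑' n : ℤ, (starRingEnd ℂ) (torusTermG c n z) := by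
          simp only [starRingEnd_apply]; exact tsum_star
      _ = ∑' n : ℤ, torusTermG c (-n) z := tsum_congr (fun n => conj_termG c hcc n z)
      _ = ∑' n : ℤ, torusTermG c n z := (Equiv.neg ℤ).tsum_eq (fun n => torusTermG c n z)
  exact Complex.conj_eq_iff_im.mp h1


lemma hasSum_fourier_H (H : ℝ → ℝ) (hsmooth : ContDiff ℝ (⊤:ℕ∞) H)
    (hper : ∀ z : ℝ, H (z + 2 * Real.pi) = H z) (c : ℤ → ℂ)
    (hc : ∀ n : ℤ, c n = (1 / (2 * Real.pi) : ℂ) *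
      ∫ z in (0:ℝ)..(2 * Real.pi), (H z : ℂ) * Complex.exp (-Complex.I * (n : ℂ) * (z : ℂ)))
    (hsc : Summable fun n : ℤ => ‖c n‖) (z : ℝ) :
    HasSum (fun n : ℤ => c n * Complex.exp (Complex.I * (n:ℂ) * (z:ℂ))) ((H z : ℂ)) := by
  haveI : Fact (0 < 2*π) := ⟨by positivity⟩
  have hperC : Function.Periodic (fun z : ℝ => (H z : ℂ)) (2*π) := fun x => by simp [hper x]
  have hcontC : Continuous (fun z : ℝ => (H z : ℂ)) :=
    Complex.continuous_ofReal.comp hsmooth.continuous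
  have hcont : Continuous hperC.lift := hcontC.quotient_liftOn' _
  let f : C(AddCircle (2*π), ℂ) := ⟨hperC.lift, hcont⟩
  have hfcoe : ∀ x : ℝ, f (x : AddCircle (2*π)) = (H x : ℂ) := fun x => hperC.lift_coe x
  have hcoeff : ∀ n : ℤ, fourierCoeff (⇑f) n = c n := by
    intro n
    rw [fourierCoeff_eq_intervalIntegral (⇑f) n 0, zero_add, hc n]
    rw [Complex.real_smul]
    congr 1
    · push_cast; ring
    · apply intervalIntegral.integral_congr
      intro x _
      show (fourier (-n) (x : AddCircle (2*π))) • f (x : AddCircle (2*π))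
          = (H x : ℂ) * Complex.exp (-Complex.I * (n:ℂ) * (x:ℂ))
      rw [hfcoe x, fourier_coe_apply, smul_eq_mul, mul_comm]
      have harg : 2 * (Real.pi:ℂ) * Complex.I * ((-n : ℤ):ℂ) * (x:ℂ) / ((2*Real.pi : ℝ):ℂ)
          = -Complex.I*(n:ℂ)*(x:ℂ) := by
        push_cast
        field_simp [Complex.ofReal_ne_zero.mpr Real.pi_ne_zero]
      rw [harg]
  have hsummable : Summable (fourierCoeff (⇑f)) := by
    apply Summable.of_norm
    apply hsc.congr
    intro n
    rw [hcoeff n]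
  have key := has_pointwise_sum_fourier_series_of_summable (f := f) hsummable (z : AddCircle (2*π))
  rw [hfcoe z] at key
  have hfun : ∀ i : ℤ, fourierCoeff (⇑f) i • fourier i (z : AddCircle (2*π))
      = c i * Complex.exp (Complex.I*(i:ℂ)*(z:ℂ)) := by
    intro i
    rw [hcoeff i, fourier_coe_apply, smul_eq_mul]
    have harg : 2 * (Real.pi:ℂ) * Complex.I * ((i : ℤ):ℂ) * (z:ℂ) / ((2*Real.pi : ℝ):ℂ)
        = Complex.I*(i:ℂ)*(z:ℂ) := by
      push_cast
      field_simp [Complex.ofReal_ne_zero.mpr Real.pi_ne_zero]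
    rw [harg]
  simp only [hfun] at key
  exact key


lemma abs_weight_le (n : ℤ) (hn : ¬(n = 1 ∨ n = -1)) : |3 + 4 / ((n : ℝ) ^ 2 - 1)| ≤ 5 := by
  push_neg at hn
  by_cases h0 : n = 0
  · subst h0; norm_num
  · have h2 : (2:ℝ) ≤ |(n:ℝ)| := by
      rw [← Int.cast_abs]
      have h2' : (2:ℤ) ≤ |n| := by rw [Int.abs_eq_natAbs]; omega
      exact_mod_cast h2'
    have h4 : (4:ℝ) ≤ (n:ℝ)^2 := by
      have := sq_abs ((n:ℝ))
      nlinarith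
    have hd : (3:ℝ) ≤ (n:ℝ)^2 - 1 := by linarith
    have hdpos : (0:ℝ) < (n:ℝ)^2 - 1 := by linarith
    have hfrac : (4:ℝ) / ((n:ℝ)^2 - 1) ≤ 2 := by
      rw [div_le_iff₀ hdpos]; linarith
    have hfrac0 : (0:ℝ) ≤ 4 / ((n:ℝ)^2 - 1) := by positivity
    rw [abs_of_nonneg (by linarith)]
    linarith

/-- the key pointwise algebraic identity -/
lemma combine (c : ℤ → ℂ) (hc1 : c 1 = 0) (hcm1 : c (-1) = 0) (n : ℤ) (z : ℝ) (h : ℂ) :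
    2 * h * (torusTermF c n z * ((Real.cos z : ℝ) : ℂ) - torusTermG c n z * ((Real.sin z : ℝ) : ℂ))
      - 3 * h * (c n * Complex.exp (Complex.I * (n:ℂ) * (z:ℂ)))
    = -(((if n = 1 ∨ n = -1 then (0:ℝ) else 3 + 4 / ((n : ℝ) ^ 2 - 1)) : ℝ) : ℂ) * c n *
        (h * Complex.exp (Complex.I * (n:ℂ) * (z:ℂ))) := by
  by_cases hn : n = 1 ∨ n = -1
  · rw [if_pos hn]
    rcases hn with rfl | rfl <;> simp [torusTermF, torusTermG, hc1, hcm1]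
  · rw [if_neg hn, torusTermF, torusTermG, if_neg hn, if_neg hn]
    have hu : ((n:ℂ)+1) ≠ 0 := by
      have hh : ((n+1 : ℤ):ℂ) ≠ 0 := Int.cast_ne_zero.mpr (by omega)
      push_cast at hh; exact hh
    have hv : ((n:ℂ)-1) ≠ 0 := by
      have hh : ((n-1 : ℤ):ℂ) ≠ 0 := Int.cast_ne_zero.mpr (by omega)
      push_cast at hh; exact hh
    have hp : Complex.exp (Complex.I * ((n:ℂ)+1) * (z:ℂ))
        = Complex.exp (Complex.I * (n:ℂ) * (z:ℂ)) * Complex.exp ((z:ℂ) * Complex.I) := by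
      rw [← Complex.exp_add]; congr 1; ring
    have hq : Complex.exp (Complex.I * ((n:ℂ)-1) * (z:ℂ))
        = Complex.exp (Complex.I * (n:ℂ) * (z:ℂ)) * (Complex.exp ((z:ℂ) * Complex.I))⁻¹ := by
      rw [← Complex.exp_neg, ← Complex.exp_add]; congr 1; ring
    have hcos : ((Real.cos z : ℝ) : ℂ)
        = (Complex.exp ((z:ℂ) * Complex.I) + (Complex.exp ((z:ℂ) * Complex.I))⁻¹) / 2 := by
      rw [Complex.ofReal_cos, Complex.cos]
      congr 2
      rw [← Complex.exp_neg]; congr 1; ring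
    have hsin : ((Real.sin z : ℝ) : ℂ)
        = ((Complex.exp ((z:ℂ) * Complex.I))⁻¹ - Complex.exp ((z:ℂ) * Complex.I)) * Complex.I / 2 := by
      rw [Complex.ofReal_sin, Complex.sin]
      congr 3
      rw [← Complex.exp_neg]; congr 1; ring
    rw [hp, hq, hcos, hsin]
    have hw : (((3 + 4 / ((n : ℝ) ^ 2 - 1)) : ℝ) : ℂ) = 3 + 4 / ((n:ℂ)^2 - 1) := by
      push_cast; ring
    rw [hw]
    have hpne : Complex.exp ((z:ℂ) * Complex.I) ≠ 0 := Complex.exp_ne_zero _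
    have hnn : ((n:ℂ)^2 - 1) ≠ 0 := by
      have : ((n:ℂ)^2 - 1) = ((n:ℂ)+1) * ((n:ℂ)-1) := by ring
      rw [this]; exact mul_ne_zero hu hv
    field_simp
    ring_nf
    simp only [Complex.I_sq]
    ring


lemma interchange_tsum_integral (g : ℤ → ℝ → ℂ) (hcont : ∀ n, Continuous (g n))
    (b : ℤ → ℝ) (hb : Summable b)
    (hbd : ∀ n, ∀ z ∈ Set.Ioc (0:ℝ) (2*π), ‖g n z‖ ≤ b n) :
    ∫ z in (0:ℝ)..(2*π), ∑' n : ℤ, g n z = ∑' n : ℤ, ∫ z in (0:ℝ)..(2*π), g n z := by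
  have h2π : (0:ℝ) ≤ 2*π := by positivity
  have hint : ∀ n : ℤ, MeasureTheory.Integrable (g n)
      (MeasureTheory.volume.restrict (Set.Ioc (0:ℝ) (2*π))) := fun n =>
    (hcont n).integrableOn_Ioc
  have hbnonneg : ∀ n, 0 ≤ b n := fun n => le_trans (norm_nonneg _)
    (hbd n (π) ⟨by positivity, by nlinarith [Real.pi_pos]⟩)
  have hsum : Summable fun n : ℤ =>
      ∫ z in Set.Ioc (0:ℝ) (2*π), ‖g n z‖ := by
    apply Summable.of_norm_bounded (g := fun n => b n * (2*π)) (hb.mul_right (2*π))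
    intro n
    rw [Real.norm_eq_abs, abs_of_nonneg (MeasureTheory.integral_nonneg (fun z => norm_nonneg _))]
    calc ∫ z in Set.Ioc (0:ℝ) (2*π), ‖g n z‖
        ≤ ∫ _ in Set.Ioc (0:ℝ) (2*π), b n := by
          apply MeasureTheory.setIntegral_mono_on (hint n).norm
            ((MeasureTheory.integrableOn_const_iff).mpr (Or.inr (by
              rw [Real.volume_Ioc]; exact ENNReal.ofReal_lt_top)))
            measurableSet_Ioc
          intro z hz
          exact hbd n z hz
      _ = b n * (2*π) := by
          rw [MeasureTheory.setIntegral_const, smul_eq_mul, Real.volume_real_Ioc,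
            max_eq_left (by linarith)]
          ring
  rw [intervalIntegral.integral_of_le h2π]
  rw [← MeasureTheory.integral_tsum_of_summable_integral_norm hint hsum]
  apply tsum_congr
  intro n
  rw [intervalIntegral.integral_of_le h2π]


theorem helicity_on_three_torus
    (H : ℝ → ℝ) (hsmooth : ContDiff ℝ (⊤ : ℕ∞) H)
    (hper : ∀ z : ℝ, H (z + 2 * Real.pi) = H z)
    (c : ℤ → ℂ)
    (hc : ∀ n : ℤ, c n = (1 / (2 * Real.pi) : ℂ) *
      ∫ z in (0:ℝ)..(2 * Real.pi), (H z : ℂ) * Complex.exp (-Complex.I * (n : ℂ) * (z : ℂ)))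
    (hc1 : c 1 = 0)
    (F G : ℝ → ℂ)
    (hF : ∀ z : ℝ, F z = ∑' n : ℤ, torusTermF c n z)
    (hG : ∀ z : ℝ, G z = ∑' n : ℤ, torusTermG c n z) :
    (∀ z : ℝ, Summable fun n : ℤ => ‖torusTermF c n z‖) ∧
    (∀ z : ℝ, Summable fun n : ℤ => ‖torusTermG c n z‖) ∧
    (∀ z : ℝ, (F z).im = 0) ∧ (∀ z : ℝ, (G z).im = 0) ∧
    (Summable fun n : ℤ =>
      |if n = 1 ∨ n = -1 then 0 else (3 + 4 / ((n : ℝ) ^ 2 - 1)) * ‖c n‖ ^ 2|) ∧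
    (1 / (2 * Real.pi)) * ∫ z in (0:ℝ)..(2 * Real.pi),
        (2 * H z * ((F z).re * Real.cos z - (G z).re * Real.sin z) - 3 * (H z) ^ 2)
      = - ∑' n : ℤ, if n = 1 ∨ n = -1 then 0 else (3 + 4 / ((n : ℝ) ^ 2 - 1)) * ‖c n‖ ^ 2 := by
  have hsm : ContDiff ℝ (⊤:ℕ∞) H := hsmooth.of_le (by simp)
  have hsc : Summable fun n : ℤ => ‖c n‖ := summable_norm_c H hsm hper c hc
  have hcc : ∀ n : ℤ, c (-n) = (starRingEnd ℂ) (c n) := conj_c H c hc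
  have hcm1 : c (-1) = 0 := by rw [show ((-1:ℤ)) = -(1:ℤ) from rfl, hcc 1, hc1, map_zero]
  have hsF : ∀ z : ℝ, Summable fun n : ℤ => ‖torusTermF c n z‖ := by
    intro z
    apply Summable.of_norm_bounded (g := fun n => 2 * ‖c n‖) (hsc.mul_left 2)
    intro n
    rw [norm_norm]
    exact norm_termF_le c n z
  have hsG : ∀ z : ℝ, Summable fun n : ℤ => ‖torusTermG c n z‖ := by
    intro z
    apply Summable.of_norm_bounded (g := fun n => 2 * ‖c n‖) (hsc.mul_left 2)
    intro n
    rw [norm_norm]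
    exact norm_termG_le c n z
  have hFim : ∀ z : ℝ, (F z).im = 0 := fun z => by rw [hF z]; exact im_tsum_termF c hcc z
  have hGim : ∀ z : ℝ, (G z).im = 0 := fun z => by rw [hG z]; exact im_tsum_termG c hcc z
  have hs2 : Summable fun n : ℤ => ‖c n‖^2 := by
    apply Summable.of_norm_bounded_eventually hsc
    have h0 := hsc.tendsto_cofinite_zero
    have h1 : ∀ᶠ n in Filter.cofinite, ‖c n‖ < 1 := h0.eventually_lt_const one_pos
    filter_upwards [h1] with n hn
    rw [Real.norm_eq_abs, abs_of_nonneg (by positivity)]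
    nlinarith [norm_nonneg (c n)]
  have hq : Summable fun n : ℤ =>
      (if n = 1 ∨ n = -1 then (0:ℝ) else (3 + 4 / ((n : ℝ) ^ 2 - 1)) * ‖c n‖ ^ 2) := by
    apply Summable.of_norm_bounded (g := fun n => 5 * ‖c n‖^2) (hs2.mul_left 5)
    intro n
    by_cases hn : n = 1 ∨ n = -1
    · rw [if_pos hn, norm_zero]; positivity
    · rw [if_neg hn, Real.norm_eq_abs, abs_mul, abs_of_nonneg (by positivity : (0:ℝ) ≤ ‖c n‖^2)]
      exact mul_le_mul_of_nonneg_right (abs_weight_le n hn) (by positivity)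
  refine ⟨hsF, hsG, hFim, hGim, hq.abs, ?_⟩
  -- main computation
  have hπC : ((Real.pi:ℝ):ℂ) ≠ 0 := Complex.ofReal_ne_zero.mpr Real.pi_ne_zero
  obtain ⟨M, hM⟩ := (isCompact_Icc (a := (0:ℝ)) (b := 2*π)).exists_bound_of_continuousOn
      (f := fun z => ((H z : ℝ) : ℂ))
      ((Complex.continuous_ofReal.comp hsm.continuous).continuousOn)
  set gt : ℤ → ℝ → ℂ := fun n z =>
    -((((if n = 1 ∨ n = -1 then (0:ℝ) else 3 + 4 / ((n : ℝ) ^ 2 - 1)) : ℝ)):ℂ) * c n *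
      ((H z : ℂ) * Complex.exp (Complex.I * (n:ℂ) * (z:ℂ))) with hgt
  have step1 : ∀ z : ℝ, HasSum (fun n : ℤ => gt n z)
      (((2 * H z * ((F z).re * Real.cos z - (G z).re * Real.sin z) - 3 * (H z)^2 : ℝ)):ℂ) := by
    intro z
    have hFs : HasSum (fun n : ℤ => torusTermF c n z) (F z) := by
      have h1 := (Summable.of_norm (hsF z)).hasSum
      rwa [← hF z] at h1
    have hGs : HasSum (fun n : ℤ => torusTermG c n z) (G z) := by
      have h1 := (Summable.of_norm (hsG z)).hasSum
      rwa [← hG z] at h1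
    have hHs := hasSum_fourier_H H hsm hper c hc hsc z
    have htot := (((hFs.mul_right (((Real.cos z : ℝ)):ℂ)).sub
      (hGs.mul_right (((Real.sin z:ℝ)):ℂ))).mul_left (2*((H z : ℝ):ℂ))).sub
      (hHs.mul_left (3*((H z : ℝ):ℂ)))
    rw [show (fun n : ℤ => 2*((H z : ℝ):ℂ) * (torusTermF c n z * ((Real.cos z:ℝ):ℂ)
          - torusTermG c n z * ((Real.sin z:ℝ):ℂ))
          - 3*((H z : ℝ):ℂ)*(c n * Complex.exp (Complex.I * (n:ℂ) * (z:ℂ))))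
        = fun n : ℤ => gt n z from funext (fun n => combine c hc1 hcm1 n z ((H z : ℝ):ℂ))] at htot
    have hFre : (((F z).re : ℝ):ℂ) = F z := Complex.ext (by simp) (by simp [hFim z])
    have hGre : (((G z).re : ℝ):ℂ) = G z := Complex.ext (by simp) (by simp [hGim z])
    have hval : (((2 * H z * ((F z).re * Real.cos z - (G z).re * Real.sin z) - 3 * (H z)^2 : ℝ)):ℂ)
        = 2*((H z : ℝ):ℂ) * ((F z) * ((Real.cos z:ℝ):ℂ) - (G z) * ((Real.sin z:ℝ):ℂ))
          - 3*((H z : ℝ):ℂ)*((H z : ℝ):ℂ) := by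
      push_cast
      rw [hFre, hGre]
      ring
    rw [hval]
    exact htot
  have hgcont : ∀ n : ℤ, Continuous (gt n) := by
    intro n
    exact continuous_const.mul ((Complex.continuous_ofReal.comp hsm.continuous).mul
      (Complex.continuous_exp.comp (by continuity)))
  have hM0 : 0 ≤ M := le_trans (norm_nonneg _) (hM 0 ⟨le_refl _, by positivity⟩)
  have hbd : ∀ n : ℤ, ∀ z ∈ Set.Ioc (0:ℝ) (2*π), ‖gt n z‖ ≤ 5 * (M * ‖c n‖) := by
    intro n z hz
    have hzI : z ∈ Set.Icc (0:ℝ) (2*π) := ⟨hz.1.le, hz.2⟩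
    have hHzM : ‖((H z : ℝ):ℂ)‖ ≤ M := hM z hzI
    have hw5 : ‖((((if n = 1 ∨ n = -1 then (0:ℝ) else 3 + 4 / ((n : ℝ) ^ 2 - 1)) : ℝ)):ℂ)‖ ≤ 5 := by
      rw [Complex.norm_real, Real.norm_eq_abs]
      by_cases hn : n = 1 ∨ n = -1
      · rw [if_pos hn]; norm_num
      · rw [if_neg hn]; exact abs_weight_le n hn
    rw [hgt]
    simp only
    rw [norm_mul, norm_mul, norm_neg, norm_mul, norm_exp_I_mul_int', mul_one]
    have key1 : ‖((((if n = 1 ∨ n = -1 then (0:ℝ) else 3 + 4 / ((n : ℝ) ^ 2 - 1)) : ℝ)):ℂ)‖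
        * ‖((H z : ℝ):ℂ)‖ ≤ 5 * M := mul_le_mul hw5 hHzM (norm_nonneg _) (by norm_num)
    calc ‖((((if n = 1 ∨ n = -1 then (0:ℝ) else 3 + 4 / ((n : ℝ) ^ 2 - 1)) : ℝ)):ℂ)‖ * ‖c n‖
          * ‖((H z : ℝ):ℂ)‖
        = (‖((((if n = 1 ∨ n = -1 then (0:ℝ) else 3 + 4 / ((n : ℝ) ^ 2 - 1)) : ℝ)):ℂ)‖
          * ‖((H z : ℝ):ℂ)‖) * ‖c n‖ := by ring
      _ ≤ (5 * M) * ‖c n‖ := mul_le_mul_of_nonneg_right key1 (norm_nonneg _)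
      _ = 5 * (M * ‖c n‖) := by ring
  have hint : ∀ n : ℤ, (∫ z in (0:ℝ)..(2*π), gt n z)
      = -(2*(Real.pi:ℂ)) * (((if n = 1 ∨ n = -1 then (0:ℝ)
          else (3 + 4 / ((n : ℝ) ^ 2 - 1)) * ‖c n‖ ^ 2) : ℝ) : ℂ) := by
    intro n
    rw [hgt]
    simp only
    rw [intervalIntegral.integral_const_mul, integral_H_exp H c hc n, hcc n]
    have hconj : c n * (starRingEnd ℂ) (c n) = ((‖c n‖^2 : ℝ):ℂ) := by
      rw [Complex.mul_conj, Complex.normSq_eq_norm_sq]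
    by_cases hn : n = 1 ∨ n = -1
    · rw [if_pos hn, if_pos hn]
      simp
    · rw [if_neg hn, if_neg hn]
      push_cast
      push_cast at hconj
      linear_combination (-(2*(Real.pi:ℂ)) * (3 + 4 / ((n:ℂ)^2 - 1))) * hconj
  have key2 : (((∫ z in (0:ℝ)..(2*π),
        (2 * H z * ((F z).re * Real.cos z - (G z).re * Real.sin z) - 3 * (H z)^2)) : ℝ) : ℂ)
      = -(2*(Real.pi:ℂ)) * (((∑' n : ℤ, (if n = 1 ∨ n = -1 then (0:ℝ)
          else (3 + 4 / ((n : ℝ) ^ 2 - 1)) * ‖c n‖ ^ 2)) : ℝ) : ℂ) := by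
    rw [← intervalIntegral.integral_ofReal]
    have e1 : (∫ z in (0:ℝ)..(2*π),
          (((2 * H z * ((F z).re * Real.cos z - (G z).re * Real.sin z) - 3 * (H z)^2 : ℝ)):ℂ))
        = ∫ z in (0:ℝ)..(2*π), ∑' n : ℤ, gt n z :=
      intervalIntegral.integral_congr (fun z _ => ((step1 z).tsum_eq).symm)
    rw [e1, interchange_tsum_integral gt hgcont (fun n => 5 * (M * ‖c n‖))
      ((hsc.mul_left M).mul_left 5) hbd, tsum_congr hint, tsum_mul_left, ← Complex.ofReal_tsum]
  have key3 : (∫ z in (0:ℝ)..(2*π),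
        (2 * H z * ((F z).re * Real.cos z - (G z).re * Real.sin z) - 3 * (H z)^2))
      = -(2*Real.pi) * (∑' n : ℤ, (if n = 1 ∨ n = -1 then (0:ℝ)
          else (3 + 4 / ((n : ℝ) ^ 2 - 1)) * ‖c n‖ ^ 2)) := by
    exact_mod_cast key2
  rw [key3]
  field_simp
end
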